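/- arXiv:1602.05414 — 2 statements merged into one kernel-verified Lean document; each statement's English description precedes it below -/
import Mathlib

section
/- For the logarithmic mean θ(s,t) = ∫₀¹ s^α t^(1-α) dα and all positive reals s, t, u, v, we have u·∂₁θ(s,t) + v·∂₂θ(s,t) ≥ θ(u,v). -/
/-!
Differentiating under the integral sign,
`u ∂₁θ(s,t) + v ∂₂θ(s,t) = ∫₀¹ (a u/s + (1-a) v/t) s^a t^(1-a) da`, and weighted AM–GM bounds
the integrand below by `(u/s)^a (v/t)^(1-a) s^a t^(1-a) = u^a v^(1-a)`, whose integral is `θ(u,v)`.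
-/

noncomputable def logMean (s t : ℝ) : ℝ := ∫ a in (0:ℝ)..1, s ^ a * t ^ (1 - a)

noncomputable def d1θ (s t : ℝ) : ℝ := deriv (fun u => logMean u t) s

noncomputable def d2θ (s t : ℝ) : ℝ := deriv (fun v => logMean s v) t

open Real MeasureTheory Set Filter Topology

theorem intervalIntegrable_rpow_mul {f : ℝ → ℝ} (hf : IntervalIntegrable f volume 0 1) {x : ℝ}
    (hx : 0 < x) : IntervalIntegrable (fun a => x ^ a * f a) volume 0 1 :=
  hf.continuousOn_mul (by fun_prop (disch := positivity))

theorem intervalIntegrable_mul_rpow_sub_one_mul {f : ℝ → ℝ} (hf : IntervalIntegrable f volume 0 1)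
    {x : ℝ} (hx : 0 < x) : IntervalIntegrable (fun a => a * x ^ (a - 1) * f a) volume 0 1 :=
  hf.continuousOn_mul (by fun_prop (disch := positivity))

-- For `a ∈ (0, 1]` and `x > s / 2`, the integrand `a x ^ (a - 1) f a` of the derivative is
-- dominated by its value at `x = s / 2`.
theorem hasDerivAt_integral_rpow_mul {f : ℝ → ℝ} (hf : IntervalIntegrable f volume 0 1) {s : ℝ}
    (hs : 0 < s) :
    HasDerivAt (fun x => ∫ a in (0:ℝ)..1, x ^ a * f a)
      (∫ a in (0:ℝ)..1, a * s ^ (a - 1) * f a) s := by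
  have hs₂ : 0 < s / 2 := half_pos hs
  have hnhds : Ioi (s / 2) ∈ 𝓝 s := Ioi_mem_nhds (half_lt_self hs)
  refine (intervalIntegral.hasDerivAt_integral_of_dominated_loc_of_deriv_le
    (F' := fun x a => a * x ^ (a - 1) * f a) (bound := fun a => ‖a * (s / 2) ^ (a - 1) * f a‖)
    hnhds ?_ (intervalIntegrable_rpow_mul hf hs)
    (intervalIntegrable_mul_rpow_sub_one_mul hf hs).aestronglyMeasurable_restrict_uIoc ?_
    (intervalIntegrable_mul_rpow_sub_one_mul hf hs₂).norm ?_).2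
  · filter_upwards [hnhds] with x hx
    exact (intervalIntegrable_rpow_mul hf (hs₂.trans hx)).aestronglyMeasurable_restrict_uIoc
  · refine ae_of_all _ fun a ha x hx => ?_
    obtain ⟨ha₀, ha₁⟩ : 0 < a ∧ a ≤ 1 := by rwa [uIoc_of_le zero_le_one] at ha
    have hx : s / 2 ≤ x := le_of_lt hx
    have hpow : x ^ (a - 1) ≤ (s / 2) ^ (a - 1) := rpow_le_rpow_of_nonpos hs₂ hx (by linarith)
    simp only [norm_mul, norm_of_nonneg ha₀.le, norm_of_nonneg (rpow_nonneg (hs₂.le.trans hx) _),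
      norm_of_nonneg (rpow_nonneg hs₂.le _)]
    gcongr
  · refine ae_of_all _ fun a _ x hx => ?_
    exact (hasDerivAt_rpow_const (Or.inl (hs₂.trans hx).ne')).mul_const (f a)

theorem hasDerivAt_logMean_left {s t : ℝ} (hs : 0 < s) (ht : 0 < t) :
    HasDerivAt (fun x => logMean x t) (∫ a in (0:ℝ)..1, a * s ^ (a - 1) * t ^ (1 - a)) s :=
  hasDerivAt_integral_rpow_mul
    (Continuous.intervalIntegrable (by fun_prop (disch := positivity)) _ _) hs

theorem logMean_comm (s t : ℝ) : logMean s t = logMean t s := by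
  unfold logMean
  simpa [mul_comm] using intervalIntegral.integral_comp_sub_left (a := 0) (b := 1)
    (fun a => t ^ a * s ^ (1 - a)) 1

theorem d2θ_eq_d1θ (s t : ℝ) : d2θ s t = d1θ t s := by
  simp only [d2θ, d1θ, logMean_comm s]

theorem d1θ_eq {s t : ℝ} (hs : 0 < s) (ht : 0 < t) :
    d1θ s t = ∫ a in (0:ℝ)..1, a * s ^ (a - 1) * t ^ (1 - a) :=
  (hasDerivAt_logMean_left hs ht).deriv

theorem d2θ_eq {s t : ℝ} (hs : 0 < s) (ht : 0 < t) :
    d2θ s t = ∫ a in (0:ℝ)..1, (1 - a) * s ^ a * t ^ (-a) := by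
  rw [d2θ_eq_d1θ, d1θ_eq ht hs]
  simpa [mul_right_comm] using intervalIntegral.integral_comp_sub_left (a := 0) (b := 1)
    (fun a => (1 - a) * s ^ a * t ^ (-a)) 1

-- The tangent plane of the concave, 1-homogeneous `(s, t) ↦ s ^ a * t ^ (1 - a)` lies above it:
-- weighted AM–GM for `u / s` and `v / t`.
theorem rpow_mul_rpow_le_tangent {s t u v a : ℝ} (hs : 0 < s) (ht : 0 < t) (hu : 0 ≤ u)
    (hv : 0 ≤ v) (ha₀ : 0 ≤ a) (ha₁ : a ≤ 1) :
    u ^ a * v ^ (1 - a) ≤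
      u * (a * s ^ (a - 1) * t ^ (1 - a)) + v * ((1 - a) * s ^ a * t ^ (-a)) := by
  have amgm : (u / s) ^ a * (v / t) ^ (1 - a) ≤ a * (u / s) + (1 - a) * (v / t) :=
    geom_mean_le_arith_mean2_weighted ha₀ (by linarith) (by positivity) (by positivity) (by ring)
  have hst : 0 < s ^ a * t ^ (1 - a) := by positivity
  calc u ^ a * v ^ (1 - a) = (u / s) ^ a * (v / t) ^ (1 - a) * (s ^ a * t ^ (1 - a)) := by
        rw [div_rpow hu hs.le, div_rpow hv ht.le]
        field_simp
    _ ≤ (a * (u / s) + (1 - a) * (v / t)) * (s ^ a * t ^ (1 - a)) := by gcongr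
    _ = u * (a * s ^ (a - 1) * t ^ (1 - a)) + v * ((1 - a) * s ^ a * t ^ (-a)) := by
        rw [rpow_sub_one hs.ne', rpow_neg ht.le, rpow_sub ht, rpow_one]
        field_simp

/-- For all positive reals `s, t, u, v`, `u·∂₁θ(s,t) + v·∂₂θ(s,t) ≥ θ(u,v)`. -/
theorem logMean_deriv_inequality (s t u v : ℝ) (hs : 0 < s) (ht : 0 < t)
    (hu : 0 < u) (hv : 0 < v) :
    u * d1θ s t + v * d2θ s t ≥ logMean u v := by
  rw [d1θ_eq hs ht, d2θ_eq hs ht, ge_iff_le, ← intervalIntegral.integral_const_mul,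
    ← intervalIntegral.integral_const_mul, ← intervalIntegral.integral_add
      (Continuous.intervalIntegrable (by fun_prop (disch := positivity)) _ _)
      (Continuous.intervalIntegrable (by fun_prop (disch := positivity)) _ _)]
  exact intervalIntegral.integral_mono_on zero_le_one
    (Continuous.intervalIntegrable (by fun_prop (disch := positivity)) _ _)
    (Continuous.intervalIntegrable (by fun_prop (disch := positivity)) _ _)
    fun a ha => rpow_mul_rpow_le_tangent hs ht hu.le hv.le ha.1 ha.2
end

section
/- For the Ising model with interaction matrix k (symmetric, zero diagonal) at inverse temperature β, with q(x,δ_i,δ_j) = c(x,δ_i)c(x,δ_j)π_β(x) where c(x,δ_i) = exp(−(β/2)(H(δ_i x)−H(x))), the quantity q(y, δ_i, δ_j) for y ∈ {x, δ_i x, δ_j x, δ_iδ_j x} equals exp(β ∑_{l,m≠i,j} k_{lm} x_l x_m)·exp(−2β k_{ij} y_i y_j)·π-independent normalization; in particular q(y,δ_i,δ_j) depends on y only through y_i y_j. -/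
/-- Spin value of a Boolean configuration entry. -/
def spin (b : Bool) : ℝ := if b then 1 else -1

/-- Flip of the `i`-th spin. -/
def flipSpin {n : ℕ} (i : Fin n) (σ : Fin n → Bool) : Fin n → Bool :=
  Function.update σ i (!(σ i))

/-- The Ising Hamiltonian `H(σ) = −∑_{l,m} k_{lm} σ_l σ_m`. -/
noncomputable def isingH (n : ℕ) (k : Fin n → Fin n → ℝ) (σ : Fin n → Bool) : ℝ :=
  -∑ l : Fin n, ∑ m : Fin n, k l m * spin (σ l) * spin (σ m)

/-- Partition function `Z_β`. -/
noncomputable def isingZ (n : ℕ) (k : Fin n → Fin n → ℝ) (β : ℝ) : ℝ :=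
  ∑ σ : Fin n → Bool, Real.exp (-β * isingH n k σ)

/-- Gibbs measure `π_β`. -/
noncomputable def isingPi (n : ℕ) (k : Fin n → Fin n → ℝ) (β : ℝ)
    (σ : Fin n → Bool) : ℝ :=
  (isingZ n k β)⁻¹ * Real.exp (-β * isingH n k σ)

/-- Glauber rate `c(σ,δ_i) = exp(−(β/2)(H(δ_i σ)−H(σ)))`. -/
noncomputable def isingRate (n : ℕ) (k : Fin n → Fin n → ℝ) (β : ℝ)
    (σ : Fin n → Bool) (i : Fin n) : ℝ :=
  Real.exp (-(β/2) * (isingH n k (flipSpin i σ) - isingH n k σ))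

section helpers
variable {n : ℕ}

lemma spin_not (b : Bool) : spin (!b) = -spin b := by cases b <;> simp [spin]

lemma sum_split (i j : Fin n) (hij : i ≠ j) (g : Fin n → ℝ) :
    ∑ l, g l = g i + g j + ∑ l ∈ Finset.univ.filter (fun l => l ≠ i ∧ l ≠ j), g l := by
  have h1 : (Finset.univ : Finset (Fin n)) =
      insert i (insert j (Finset.univ.filter (fun l => l ≠ i ∧ l ≠ j))) := by
    ext l; simp; tauto
  have hi : i ∉ insert j (Finset.univ.filter (fun l => l ≠ i ∧ l ≠ j)) := by simp [hij]
  have hj : j ∉ Finset.univ.filter (fun l => l ≠ i ∧ l ≠ j) := by simp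
  conv_lhs => rw [h1]
  rw [Finset.sum_insert hi, Finset.sum_insert hj]; ring

lemma expand_sum (k : Fin n → Fin n → ℝ)
    (hsym : ∀ i j, k i j = k j i) (hdiag : ∀ i, k i i = 0)
    (i j : Fin n) (hij : i ≠ j) (τ : Fin n → Bool) :
    (∑ l : Fin n, ∑ m : Fin n, k l m * spin (τ l) * spin (τ m)) =
      (∑ l ∈ Finset.univ.filter (fun l => l ≠ i ∧ l ≠ j),
        ∑ m ∈ Finset.univ.filter (fun m => m ≠ i ∧ m ≠ j),
          k l m * spin (τ l) * spin (τ m))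
      + 2 * spin (τ i) *
          (∑ m ∈ Finset.univ.filter (fun m => m ≠ i ∧ m ≠ j), k i m * spin (τ m))
      + 2 * spin (τ j) *
          (∑ m ∈ Finset.univ.filter (fun m => m ≠ i ∧ m ≠ j), k j m * spin (τ m))
      + 2 * k i j * spin (τ i) * spin (τ j) := by
  set F := Finset.univ.filter (fun l : Fin n => l ≠ i ∧ l ≠ j) with hF
  rw [sum_split i j hij]
  rw [sum_split i j hij (fun m => k i m * spin (τ i) * spin (τ m))]
  rw [sum_split i j hij (fun m => k j m * spin (τ j) * spin (τ m))]
  have hin : ∀ l, (∑ m, k l m * spin (τ l) * spin (τ m)) =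
      k l i * spin (τ l) * spin (τ i) + k l j * spin (τ l) * spin (τ j) +
      ∑ m ∈ F, k l m * spin (τ l) * spin (τ m) := fun l => sum_split i j hij _
  rw [Finset.sum_congr rfl (fun l _ => hin l)]
  rw [Finset.sum_add_distrib, Finset.sum_add_distrib]
  have e1 : ∑ l ∈ F, k l i * spin (τ l) * spin (τ i)
      = spin (τ i) * ∑ l ∈ F, k i l * spin (τ l) := by
    rw [Finset.mul_sum]; exact Finset.sum_congr rfl fun l _ => by rw [hsym l i]; ring
  have e2 : ∑ l ∈ F, k l j * spin (τ l) * spin (τ j)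
      = spin (τ j) * ∑ l ∈ F, k j l * spin (τ l) := by
    rw [Finset.mul_sum]; exact Finset.sum_congr rfl fun l _ => by rw [hsym l j]; ring
  have e3 : ∑ m ∈ F, k i m * spin (τ i) * spin (τ m)
      = spin (τ i) * ∑ m ∈ F, k i m * spin (τ m) := by
    rw [Finset.mul_sum]; exact Finset.sum_congr rfl fun m _ => by ring
  have e4 : ∑ m ∈ F, k j m * spin (τ j) * spin (τ m)
      = spin (τ j) * ∑ m ∈ F, k j m * spin (τ m) := by
    rw [Finset.mul_sum]; exact Finset.sum_congr rfl fun m _ => by ring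
  rw [e1, e2, e3, e4, hdiag i, hdiag j, hsym j i]
  ring

lemma sums_congr (k : Fin n → Fin n → ℝ) (i j : Fin n) (τ y : Fin n → Bool)
    (h : ∀ m, m ≠ i → m ≠ j → τ m = y m) :
    (∑ l ∈ Finset.univ.filter (fun l => l ≠ i ∧ l ≠ j),
      ∑ m ∈ Finset.univ.filter (fun m => m ≠ i ∧ m ≠ j),
        k l m * spin (τ l) * spin (τ m))
    = ∑ l ∈ Finset.univ.filter (fun l => l ≠ i ∧ l ≠ j),
      ∑ m ∈ Finset.univ.filter (fun m => m ≠ i ∧ m ≠ j),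
        k l m * spin (y l) * spin (y m) := by
  refine Finset.sum_congr rfl fun l hl => Finset.sum_congr rfl fun m hm => ?_
  simp only [Finset.mem_filter] at hl hm
  rw [h l hl.2.1 hl.2.2, h m hm.2.1 hm.2.2]

lemma sum1_congr (c : Fin n → ℝ) (i j : Fin n) (τ y : Fin n → Bool)
    (h : ∀ m, m ≠ i → m ≠ j → τ m = y m) :
    (∑ m ∈ Finset.univ.filter (fun m => m ≠ i ∧ m ≠ j), c m * spin (τ m))
    = ∑ m ∈ Finset.univ.filter (fun m => m ≠ i ∧ m ≠ j), c m * spin (y m) := by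
  refine Finset.sum_congr rfl fun m hm => ?_
  simp only [Finset.mem_filter] at hm
  rw [h m hm.2.1 hm.2.2]

lemma flip_apply_ne {a m : Fin n} (h : m ≠ a) (y : Fin n → Bool) :
    flipSpin a y m = y m := Function.update_of_ne h _ _

lemma flip_apply_eq (a : Fin n) (y : Fin n → Bool) :
    flipSpin a y a = !(y a) := Function.update_self _ _ _

lemma key_H (k : Fin n → Fin n → ℝ)
    (hsym : ∀ i j, k i j = k j i) (hdiag : ∀ i, k i i = 0)
    (i j : Fin n) (hij : i ≠ j) (y : Fin n → Bool) :
    isingH n k (flipSpin i y) + isingH n k (flipSpin j y)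
      = -2 * (∑ l ∈ Finset.univ.filter (fun l => l ≠ i ∧ l ≠ j),
          ∑ m ∈ Finset.univ.filter (fun m => m ≠ i ∧ m ≠ j),
            k l m * spin (y l) * spin (y m))
        + 4 * k i j * spin (y i) * spin (y j) := by
  unfold isingH
  rw [expand_sum k hsym hdiag i j hij (flipSpin i y),
      expand_sum k hsym hdiag i j hij (flipSpin j y)]
  have hi : ∀ m, m ≠ i → m ≠ j → flipSpin i y m = y m := fun m h1 _ => flip_apply_ne h1 y
  have hj : ∀ m, m ≠ i → m ≠ j → flipSpin j y m = y m := fun m _ h2 => flip_apply_ne h2 y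
  rw [sums_congr k i j _ y hi, sums_congr k i j _ y hj,
      sum1_congr (fun m => k i m) i j _ y hi, sum1_congr (fun m => k j m) i j _ y hi,
      sum1_congr (fun m => k i m) i j _ y hj, sum1_congr (fun m => k j m) i j _ y hj,
      flip_apply_eq i y, flip_apply_eq j y,
      flip_apply_ne hij.symm y, flip_apply_ne hij y, spin_not, spin_not]
  ring

end helpers

/-- `q(y,δ_i,δ_j) = c(y,δ_i)c(y,δ_j)π_β(y)` for `y ∈ {x, δ_i x, δ_j x, δ_iδ_j x}`
equals `Z_β⁻¹·exp(β ∑_{l,m≠i,j} k_{lm}x_l x_m)·exp(−2β k_{ij} y_i y_j)`; in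
particular it depends on `y` only through `y_i y_j`. -/
theorem ising_q_formula (n : ℕ) (k : Fin n → Fin n → ℝ)
    (hsym : ∀ i j, k i j = k j i) (hdiag : ∀ i, k i i = 0)
    (β : ℝ) (hβ : 0 < β) (x : Fin n → Bool) (i j : Fin n) (hij : i ≠ j) :
    ∀ y : Fin n → Bool,
      (y = x ∨ y = flipSpin i x ∨ y = flipSpin j x ∨ y = flipSpin i (flipSpin j x)) →
      isingRate n k β y i * isingRate n k β y j * isingPi n k β y
        = (isingZ n k β)⁻¹ *
          Real.exp (β * ∑ l ∈ Finset.univ.filter (fun l => l ≠ i ∧ l ≠ j),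
            ∑ m ∈ Finset.univ.filter (fun m => m ≠ i ∧ m ≠ j),
              k l m * spin (x l) * spin (x m)) *
          Real.exp (-2 * β * k i j * spin (y i) * spin (y j)) := by
  intro y hy
  have hagree : ∀ m, m ≠ i → m ≠ j → y m = x m := by
    intro m h1 h2
    rcases hy with rfl | rfl | rfl | rfl
    · rfl
    · exact flip_apply_ne h1 x
    · exact flip_apply_ne h2 x
    · rw [flip_apply_ne h1, flip_apply_ne h2]
  unfold isingRate isingPi
  have hmul : ∀ a b c z : ℝ,
      Real.exp a * Real.exp b * (z * Real.exp c) = z * Real.exp (a + b + c) := by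
    intro a b c z; rw [Real.exp_add, Real.exp_add]; ring
  rw [hmul, mul_assoc, ← Real.exp_add]
  congr 1
  rw [Real.exp_eq_exp]
  have hk := key_H k hsym hdiag i j hij y
  have hS := sums_congr k i j y x hagree
  linear_combination (-(β/2)) * hk + β * hS
end
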